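/- arXiv:2510.00323 — 2 statements merged into one kernel-verified Lean document; each statement's English description precedes it below -/
import Mathlib

section
/- Dilworth's theorem: in every finite partially ordered set (P, ≤), the maximum cardinality of an antichain is equal to the smallest number n such that P can be written as a union of n chains. -/
/-!
Galvin's induction. Remove a maximal element `a` of `s`; by induction `s \ {a}` has an antichain
of size `k` and a partition into `k` chains `C₀, …, C_{k-1}`. Every `k`-antichain of `s \ {a}`
meets every `Cᵢ`, so each `Cᵢ` has a greatest element `xᵢ` lying in some `k`-antichain, and the
`xᵢ` form an antichain. If no `xᵢ` lies below `a`, adding `a` to it and `{a}` to the chains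
settles `s`. Otherwise `xᵢ ≤ a`, and `K = {a} ∪ {y ∈ Cᵢ | y ≤ xᵢ}` is a chain meeting every
`k`-antichain of `s \ {a}`; so `s \ K` has width `< k`, and its chains together with `K` cover
`s` by at most `k` chains.
-/

open Finset

section

variable {P : Type*} [PartialOrder P]

theorem IsChain.exists_isGreatest_of_finite {s : Set P} (hs : IsChain (· ≤ ·) s)
    (hfin : s.Finite) (hne : s.Nonempty) : ∃ a, IsGreatest s a := by
  obtain ⟨m, hm⟩ := hfin.exists_maximal hne
  refine ⟨m, hm.prop, fun x hx => ?_⟩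
  rcases eq_or_ne x m with rfl | hxm
  · exact le_rfl
  · exact (hs hx hm.prop hxm).elim id (hm.2 hx)

/-- A partition of `s` into `k` chains, recorded by the index `c x < k` of the chain of `x`. -/
def IsChainColoring (s : Set P) (k : ℕ) (c : P → ℕ) : Prop :=
  (∀ x ∈ s, c x < k) ∧ ∀ i, IsChain (· ≤ ·) {x | x ∈ s ∧ c x = i}

namespace IsChainColoring

variable {s t : Set P} {k l : ℕ} {c : P → ℕ}

theorem mono (hc : IsChainColoring s k c) (hts : t ⊆ s) (hkl : k ≤ l) :
    IsChainColoring t l c :=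
  ⟨fun x hx => (hc.1 x (hts hx)).trans_le hkl,
    fun i => (hc.2 i).mono fun x hx => (⟨hts hx.1, hx.2⟩ : x ∈ s ∧ c x = i)⟩

theorem injOn (hc : IsChainColoring s k c) {A : Set P} (hAs : A ⊆ s)
    (hA : IsAntichain (· ≤ ·) A) : A.InjOn c := by
  intro x hx y hy hxy
  by_contra hne
  exact (hc.2 (c x) ⟨hAs hx, rfl⟩ ⟨hAs hy, hxy.symm⟩ hne).elim (hA hx hy hne)
    (hA hy hx (Ne.symm hne))

theorem mapsTo_range (hc : IsChainColoring s k c) {A : Finset P} (hAs : ↑A ⊆ s) :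
    Set.MapsTo c A (range k) :=
  fun x hx => mem_range.2 (hc.1 x (hAs hx))

theorem card_le (hc : IsChainColoring s k c) {A : Finset P} (hAs : ↑A ⊆ s)
    (hA : IsAntichain (· ≤ ·) (A : Set P)) : #A ≤ k := by
  simpa using card_le_card_of_injOn c (hc.mapsTo_range hAs) (hc.injOn hAs hA)

theorem exists_mem_eq (hc : IsChainColoring s k c) {A : Finset P} (hAs : ↑A ⊆ s)
    (hA : IsAntichain (· ≤ ·) (A : Set P)) (hcard : #A = k) {i : ℕ} (hi : i < k) :
    ∃ x ∈ A, c x = i :=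
  surjOn_of_injOn_of_card_le c (hc.mapsTo_range hAs) (hc.injOn hAs hA) (by simp [hcard])
    (mem_range.2 hi)

theorem union_isChain [DecidableEq P] (hc : IsChainColoring s k c) {K : Finset P}
    (hK : IsChain (· ≤ ·) (K : Set P)) :
    IsChainColoring (s ∪ K) (k + 1) (fun x => if x ∈ K then k else c x) := by
  refine ⟨fun x hx => ?_, fun i => ?_⟩
  · dsimp only
    split_ifs with hxK
    · exact k.lt_succ_self
    · exact (hc.1 x (hx.resolve_right hxK)).trans k.lt_succ_self
  by_cases hik : i = k
  · refine hK.mono fun x ⟨hx, hxi⟩ => mem_coe.2 ?_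
    by_contra hxK
    simp only [if_neg hxK] at hxi
    exact (hc.1 x (hx.resolve_right hxK)).ne (hxi.trans hik)
  · refine (hc.2 i).mono fun x ⟨hx, hxi⟩ => ?_
    have hxK : x ∉ K := fun h => hik (by simpa [h] using hxi.symm)
    simp only [if_neg hxK] at hxi
    exact ⟨hx.resolve_right hxK, hxi⟩

end IsChainColoring

theorem exists_chains_iUnion_eq_univ_iff {n : ℕ} :
    (∃ C : Fin n → Set P, (∀ i, IsChain (· ≤ ·) (C i)) ∧ (⋃ i, C i) = Set.univ) ↔
      ∃ c : P → ℕ, IsChainColoring Set.univ n c := by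
  constructor
  · rintro ⟨C, hC, hU⟩
    choose f hf using fun x => Set.mem_iUnion.1 (hU.symm ▸ Set.mem_univ x : x ∈ ⋃ i, C i)
    refine ⟨fun x => f x, fun x _ => (f x).isLt, fun i x hx y hy hne => ?_⟩
    have hfxy : f x = f y := Fin.ext (hx.2.trans hy.2.symm)
    exact hC (f x) (hf x) (hfxy ▸ hf y) hne
  · rintro ⟨c, hc⟩
    refine ⟨fun i => {x | c x = i},
      fun i => (hc.2 i).mono fun x hx => (⟨trivial, hx⟩ : x ∈ Set.univ ∧ c x = i), ?_⟩
    exact Set.eq_univ_of_forall fun x => Set.mem_iUnion.2 ⟨⟨c x, hc.1 x trivial⟩, rfl⟩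

def MemAntichainOfCard (t : Finset P) (k : ℕ) (x : P) : Prop :=
  ∃ A ⊆ t, IsAntichain (· ≤ ·) (A : Set P) ∧ #A = k ∧ x ∈ A

namespace IsChainColoring

variable {s t : Finset P} {k : ℕ} {c : P → ℕ}

theorem exists_isGreatest_memAntichainOfCard (hc : IsChainColoring t k c) {A : Finset P}
    (hAt : A ⊆ t) (hA : IsAntichain (· ≤ ·) (A : Set P)) (hcard : #A = k) {i : ℕ} (hi : i < k) :
    ∃ x, IsGreatest {y | MemAntichainOfCard t k y ∧ c y = i} x := by
  refine IsChain.exists_isGreatest_of_finite ((hc.2 i).mono ?_) (t.finite_toSet.subset ?_) ?_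
  · rintro y ⟨⟨B, hBt, -, -, hyB⟩, hyi⟩
    exact ⟨hBt hyB, hyi⟩
  · rintro y ⟨⟨B, hBt, -, -, hyB⟩, -⟩
    exact hBt hyB
  · obtain ⟨y, hyA, hyi⟩ := hc.exists_mem_eq (coe_subset.2 hAt) hA hcard hi
    exact ⟨y, ⟨A, hAt, hA, hcard, hyA⟩, hyi⟩

theorem eq_of_isGreatest_of_le (hc : IsChainColoring t k c) {x : ℕ → P}
    (hx : ∀ i < k, IsGreatest {y | MemAntichainOfCard t k y ∧ c y = i} (x i)) {i j : ℕ}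
    (hi : i < k) (hj : j < k) (hle : x i ≤ x j) : i = j := by
  obtain ⟨⟨B, hBt, hB, hBcard, hxjB⟩, hxj⟩ := (hx j hj).1
  -- the `k`-antichain `B` through `x j` meets class `i` below `x i`, hence below `x j`
  obtain ⟨y, hyB, hyi⟩ := hc.exists_mem_eq (coe_subset.2 hBt) hB hBcard hi
  have hyx : y ≤ x i := (hx i hi).2 ⟨⟨B, hBt, hB, hBcard, hyB⟩, hyi⟩
  rw [← hyi, hB.eq hyB hxjB (hyx.trans hle), hxj]

theorem exists_antichain_of_forall_not_le [DecidableEq P] {a : P} (ha : Maximal (· ∈ s) a)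
    (hc : IsChainColoring (s.erase a) k c) {x : ℕ → P}
    (hx : ∀ i < k, IsGreatest {y | MemAntichainOfCard (s.erase a) k y ∧ c y = i} (x i))
    (hxa : ∀ i < k, ¬ x i ≤ a) :
    ∃ A ⊆ s, IsAntichain (· ≤ ·) (A : Set P) ∧ ∃ c : P → ℕ, IsChainColoring s #A c := by
  classical
  have hxs : ∀ i < k, x i ∈ s.erase a := fun i hi => by
    obtain ⟨⟨B, hBt, -, -, hB⟩, -⟩ := (hx i hi).1
    exact hBt hB
  have hcx : ∀ i < k, c (x i) = i := fun i hi => (hx i hi).1.2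
  set X := (range k).image x
  have hXcard : #X = k := by
    rw [card_image_of_injOn, card_range]
    intro i hi j hj hij
    rw [← hcx i (mem_range.1 hi), ← hcx j (mem_range.1 hj), hij]
  have hX : IsAntichain (· ≤ ·) (X : Set P) := by
    rw [coe_image]
    rintro _ ⟨i, hi, rfl⟩ _ ⟨j, hj, rfl⟩ hne hle
    exact hne (congrArg x (hc.eq_of_isGreatest_of_le hx (mem_range.1 hi) (mem_range.1 hj) hle))
  have hXs : X ⊆ s.erase a := image_subset_iff.2 fun i hi => hxs i (mem_range.1 hi)
  have haX : a ∉ X := fun h => (mem_erase.1 (hXs h)).1 rfl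
  refine ⟨insert a X, insert_subset ha.prop (hXs.trans (erase_subset a s)), ?_,
    fun y => if y ∈ ({a} : Finset P) then k else c y, ?_⟩
  · rw [coe_insert]
    refine hX.insert (fun _ hy _ => ?_) (fun y hy _ hay => ?_) <;>
      obtain ⟨i, hi, rfl⟩ := mem_image.1 hy
    · exact hxa i (mem_range.1 hi)
    · exact hxa i (mem_range.1 hi) (ha.2 (mem_of_mem_erase (hxs i (mem_range.1 hi))) hay)
  · rw [card_insert_of_notMem haX, hXcard]
    refine (hc.union_isChain (by simp)).mono (fun y hy => ?_) le_rfl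
    by_cases hya : y = a <;> simp [hya, hy]

theorem exists_antichain_of_le [DecidableEq P] {a : P} (ha : a ∈ s)
    (hc : IsChainColoring (s.erase a) k c) {A : Finset P} (hAt : A ⊆ s.erase a)
    (hA : IsAntichain (· ≤ ·) (A : Set P)) (hcard : #A = k) {i : ℕ} (hi : i < k) {x : P}
    (hx : IsGreatest {y | MemAntichainOfCard (s.erase a) k y ∧ c y = i} x) (hxa : x ≤ a)
    (ih : ∀ t ⊂ s,
      ∃ A ⊆ t, IsAntichain (· ≤ ·) (A : Set P) ∧ ∃ c : P → ℕ, IsChainColoring t #A c) :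
    ∃ A ⊆ s, IsAntichain (· ≤ ·) (A : Set P) ∧ ∃ c : P → ℕ, IsChainColoring s #A c := by
  classical
  set K := insert a {y ∈ s.erase a | c y = i ∧ y ≤ x}
  have haK : a ∈ K := mem_insert_self a _
  have hKs : K ⊆ s := insert_subset ha ((filter_subset _ _).trans (erase_subset a s))
  have hK : IsChain (· ≤ ·) (K : Set P) := by
    rw [coe_insert]
    refine ((hc.2 i).mono fun y hy => ?_).insert fun y hy _ => Or.inr ?_ <;>
      obtain ⟨hys, hyi, hyx⟩ := mem_filter.1 hy
    exacts [⟨hys, hyi⟩, hyx.trans hxa]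
  obtain ⟨A', hA's, hA', c', hc'⟩ := ih (s \ K) (sdiff_ssubset hKs ⟨a, haK⟩)
  -- a `k`-antichain inside `s \ K` would meet class `i` below `x`, i.e. inside `K`
  have hA'card : #A' < k := by
    by_contra! hle
    obtain ⟨B, hBA', hBcard⟩ := exists_subset_card_eq hle
    have hBt : B ⊆ s.erase a := fun y hy =>
      mem_erase.2 ⟨fun hya => (mem_sdiff.1 (hA's (hBA' hy))).2 (hya ▸ haK),
        (mem_sdiff.1 (hA's (hBA' hy))).1⟩
    have hB : IsAntichain (· ≤ ·) (B : Set P) := hA'.subset (coe_subset.2 hBA')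
    obtain ⟨y, hyB, hyi⟩ := hc.exists_mem_eq (coe_subset.2 hBt) hB hBcard hi
    have hyx : y ≤ x := hx.2 ⟨⟨B, hBt, hB, hBcard, hyB⟩, hyi⟩
    have hyK : y ∈ K := mem_insert_of_mem (mem_filter.2 ⟨hBt hyB, hyi, hyx⟩)
    exact (mem_sdiff.1 (hA's (hBA' hyB))).2 hyK
  refine ⟨A, hAt.trans (erase_subset a s), hA, _,
    (hc'.union_isChain hK).mono (fun y hy => ?_) (hcard ▸ hA'card)⟩
  by_cases hyK : y ∈ K <;> simp [hyK, mem_coe.1 hy]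

end IsChainColoring

theorem exists_antichain_isChainColoring (s : Finset P) :
    ∃ A ⊆ s, IsAntichain (· ≤ ·) (A : Set P) ∧ ∃ c : P → ℕ, IsChainColoring s #A c := by
  classical
  induction s using Finset.strongInduction with
  | H s ih =>
  obtain rfl | hs := s.eq_empty_or_nonempty
  · exact ⟨∅, empty_subset _, by simp, fun _ => 0, by simp [IsChainColoring]⟩
  obtain ⟨a, ha⟩ := s.exists_maximal hs
  obtain ⟨A, hAt, hA, c, hc⟩ := ih (s.erase a) (erase_ssubset ha.prop)
  have : Nonempty P := ⟨a⟩
  choose! x hx using fun i (hi : i < #A) =>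
    hc.exists_isGreatest_memAntichainOfCard hAt hA rfl hi
  by_cases hxa : ∃ i < #A, x i ≤ a
  · obtain ⟨i, hi, hxia⟩ := hxa
    exact hc.exists_antichain_of_le ha.prop hAt hA rfl hi (hx i hi) hxia ih
  · exact hc.exists_antichain_of_forall_not_le ha hx fun i hi h => hxa ⟨i, hi, h⟩

end

/-- **Dilworth's theorem.** In every finite partially ordered set `P`, the maximum
cardinality of an antichain is equal to the smallest number `n` such that `P` can
be written as a union of `n` chains. -/
theorem dilworth (P : Type*) [Fintype P] [PartialOrder P] :
    sSup {a : ℕ | ∃ A : Finset P, IsAntichain (· ≤ ·) (A : Set P) ∧ A.card = a} =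
      sInf {n : ℕ | ∃ C : Fin n → Set P,
        (∀ i, IsChain (· ≤ ·) (C i)) ∧ (⋃ i, C i) = Set.univ} := by
  obtain ⟨A, -, hA, c, hc⟩ := exists_antichain_isChainColoring (univ : Finset P)
  rw [coe_univ] at hc
  simp_rw [exists_chains_iUnion_eq_univ_iff]
  have hwidth :
      IsGreatest {a : ℕ | ∃ A : Finset P, IsAntichain (· ≤ ·) (A : Set P) ∧ #A = a} #A := by
    refine ⟨⟨A, hA, rfl⟩, ?_⟩
    rintro _ ⟨B, hB, rfl⟩
    exact hc.card_le (Set.subset_univ _) hB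
  have hcover : IsLeast {n | ∃ c : P → ℕ, IsChainColoring Set.univ n c} #A := by
    refine ⟨⟨c, hc⟩, ?_⟩
    rintro n ⟨c', hc'⟩
    exact hc'.card_le (Set.subset_univ _) hA
  rw [hwidth.csSup_eq, hcover.csInf_eq]
end

section
/- Exponential lower bound on Ramsey numbers for pairs: for every k ≥ 3 there exists a symmetric 2-colouring of the unordered pairs from a set with 2^⌊k/2⌋ elements such that no subset with k elements is homogeneous for the colouring. -/
/-!
Erdős's counting argument. Among the `r ^ T` colourings of the `T` unordered pairs of an `N`-set
with `r` colours, a fixed `k`-set is homogeneous in a fixed colour for exactly `r ^ (T - C(k,2))`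
of them, so if `C(N,k) · r < r ^ C(k,2)` some colouring has no homogeneous `k`-set.
For `r = 2` and `N = 2^⌊k/2⌋` this holds because `k! · C(N,k) ≤ N^k = 2^(k⌊k/2⌋)`,
`k⌊k/2⌋ ≤ C(k,2) + ⌊k/2⌋` and `2^(⌊k/2⌋+1) < k!` once `k ≥ 3`.
-/

open Finset Fintype
open scoped Nat

theorem two_pow_half_succ_lt_factorial {k : ℕ} (hk : 3 ≤ k) : 2 ^ (k / 2 + 1) < k ! :=
  calc 2 ^ (k / 2 + 1) ≤ 2 * 2 ^ (k - 2) := by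
        rw [pow_succ']; gcongr <;> omega
    _ < 2 ! * (2 + 1) ^ (k - 2) :=
        Nat.mul_lt_mul_of_pos_left (Nat.pow_lt_pow_left (by norm_num) (by omega)) two_pos
    _ ≤ (2 + (k - 2))! := Nat.factorial_mul_pow_le_factorial
    _ = k ! := by congr 1; omega

theorem half_mul_le_choose_two_add_half (k : ℕ) : k / 2 * k ≤ k.choose 2 + k / 2 := by
  have h : 2 * k.choose 2 = k * (k - 1) := by
    rw [Nat.choose_two_right]; exact Nat.mul_div_cancel' (Nat.even_mul_pred_self k).two_dvd
  rcases Nat.even_or_odd' k with ⟨m, rfl | rfl⟩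
  · rcases m with _ | m
    · simp
    · simp only [show 2 * (m + 1) - 1 = 2 * m + 1 by omega] at h
      rw [Nat.mul_div_cancel_left _ two_pos]; nlinarith
  · simp only [show 2 * m + 1 - 1 = 2 * m by omega] at h
    rw [show (2 * m + 1) / 2 = m by omega]; nlinarith

theorem choose_two_pow_half_mul_two_lt_two_pow_choose_two (k : ℕ) (hk : 3 ≤ k) :
    (2 ^ (k / 2)).choose k * 2 < 2 ^ k.choose 2 := by
  refine Nat.lt_of_mul_lt_mul_left (a := k !) ?_
  calc k ! * ((2 ^ (k / 2)).choose k * 2) ≤ 2 ^ (k / 2 * k) * 2 := by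
        rw [← mul_assoc, ← Nat.descFactorial_eq_factorial_mul_choose, pow_mul]
        gcongr; exact Nat.descFactorial_le_pow _ _
    _ ≤ 2 ^ (k.choose 2 + (k / 2 + 1)) := by
        rw [← pow_succ]
        exact Nat.pow_le_pow_right two_pos (by have := half_mul_le_choose_two_add_half k; omega)
    _ < k ! * 2 ^ k.choose 2 := by
        rw [pow_add, mul_comm]; gcongr; exact two_pow_half_succ_lt_factorial hk

theorem card_filter_forall_mem_eq_const {β γ : Type*} [Fintype β] [DecidableEq β] [Fintype γ]
    [DecidableEq γ] (P : Finset β) (c : γ) :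
    #{f : β → γ | ∀ b ∈ P, f b = c} = card γ ^ (card β - #P) := by
  have hpiFinset : ({f : β → γ | ∀ b ∈ P, f b = c} : Finset _) =
      piFinset fun b => if b ∈ P then {c} else univ := by
    ext f; simp only [mem_filter, mem_univ, true_and, mem_piFinset]
    refine forall_congr' fun b => ?_
    split_ifs with hb <;> simp [hb]
  rw [hpiFinset, card_piFinset, ← card_compl]
  simp [apply_ite, prod_ite, filter_notMem_eq_sdiff, compl_eq_univ_sdiff]

theorem exists_sym2_coloring_no_homogeneous {α γ : Type*} [Fintype α] [DecidableEq α]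
    [Fintype γ] [DecidableEq γ] [Nonempty γ] {k : ℕ}
    (hk : (card α).choose k * card γ < card γ ^ k.choose 2) :
    ∃ f : Sym2 α → γ, ∀ H : Finset α, #H = k →
      ¬ ∃ c, ∀ x ∈ H, ∀ y ∈ H, x ≠ y → f s(x, y) = c := by
  let homogeneous (p : Finset α × γ) : Finset (Sym2 α → γ) :=
    {f | ∀ e ∈ p.1.offDiag.image Sym2.mk.uncurry, f e = p.2}
  let candidates := powersetCard k (univ : Finset α) ×ˢ (univ : Finset γ)
  have hcard_homogeneous : ∀ p ∈ candidates,
      #(homogeneous p) * card γ ^ k.choose 2 = card γ ^ card (Sym2 α) := fun p hp => by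
    obtain ⟨-, hH⟩ := mem_powersetCard.1 (mem_product.1 hp).1
    rw [card_filter_forall_mem_eq_const, ← hH, ← Sym2.card_image_offDiag]
    exact pow_sub_mul_pow _ (card_le_univ _)
  have hcard_bad : #(candidates.biUnion homogeneous) < #(univ : Finset (Sym2 α → γ)) := by
    refine Nat.lt_of_mul_lt_mul_right (a := card γ ^ k.choose 2) ?_
    calc #(candidates.biUnion homogeneous) * card γ ^ k.choose 2
        ≤ (∑ p ∈ candidates, #(homogeneous p)) * card γ ^ k.choose 2 := by
          gcongr; exact card_biUnion_le
      _ = (card α).choose k * card γ * card γ ^ card (Sym2 α) := by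
          rw [sum_mul, sum_congr rfl hcard_homogeneous, sum_const, smul_eq_mul, card_product,
            card_powersetCard, card_univ, card_univ]
      _ < #(univ : Finset (Sym2 α → γ)) * card γ ^ k.choose 2 := by
          rw [card_univ, Fintype.card_fun, mul_comm]; gcongr
  obtain ⟨f, -, hf⟩ := exists_mem_notMem_of_card_lt_card hcard_bad
  refine ⟨f, fun H hH ⟨c, hc⟩ => hf <| mem_biUnion.2 ⟨(H, c), ?_, ?_⟩⟩
  · simp [candidates, hH]
  · simp only [homogeneous, mem_filter, mem_univ, true_and, forall_mem_image, mem_offDiag]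
    exact fun ⟨x, y⟩ ⟨hx, hy, hxy⟩ => hc x hx y hy hxy

/-- Exponential lower bound on Ramsey numbers for pairs: for every `k ≥ 3` there
exists a symmetric 2-colouring of the unordered pairs from a set with `2^⌊k/2⌋`
elements such that no subset with `k` elements is homogeneous for the colouring. -/
theorem ramsey_lower_bound (k : ℕ) (hk : 3 ≤ k) :
    ∃ χ : Fin (2 ^ (k / 2)) → Fin (2 ^ (k / 2)) → Fin 2,
      (∀ x y, χ x y = χ y x) ∧
      ∀ H : Finset (Fin (2 ^ (k / 2))), H.card = k →
        ¬ ∃ c : Fin 2, ∀ x ∈ H, ∀ y ∈ H, x ≠ y → χ x y = c := by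
  obtain ⟨f, hf⟩ := exists_sym2_coloring_no_homogeneous (α := Fin (2 ^ (k / 2))) (γ := Fin 2)
    (by simpa using choose_two_pow_half_mul_two_lt_two_pow_choose_two k hk)
  exact ⟨fun x y => f s(x, y), fun x y => congrArg f Sym2.eq_swap, hf⟩
end
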